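/- Lower tail bound, exponential form: for every m ≥ 1 and every natural number ℓ such that ⌊x_m⌋ − ℓ ≥ 1, the crowding in-degree process satisfies ∑_{r=0}^{⌊x_m⌋ − ℓ − 1} P m r ≤ exp(−α·ℓ). -/

import Mathlib

open Finset Filter

/-- The crowding in-degree process: `P q m r` is the probability of having
accepted `r` edges after `m` proposals, with acceptance probability `q^r`. -/
noncomputable def crowdP (q : ℝ) : ℕ → ℕ → ℝ
  | 0, r => if r = 0 then 1 else 0
  | m + 1, r =>
      crowdP q m r * (1 - q ^ r) +
        (if r = 0 then 0 else crowdP q m (r - 1) * q ^ (r - 1))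

/-- Generating function `G m z = ∑_{r=0}^m P m r · z^r`. -/
noncomputable def crowdG (q : ℝ) (m : ℕ) (z : ℝ) : ℝ :=
  ∑ r ∈ Finset.range (m + 1), crowdP q m r * z ^ r

/-- Centering sequence `x_m = (1/α)·log(1 + (e^α − 1)·m)`. -/
noncomputable def crowdX (α : ℝ) (m : ℕ) : ℝ :=
  (1 / α) * Real.log (1 + (Real.exp α - 1) * m)

/-- Mean `μ_m = ∑_{r=0}^m r · P m r`. -/
noncomputable def crowdMu (q : ℝ) (m : ℕ) : ℝ :=
  ∑ r ∈ Finset.range (m + 1), (r : ℝ) * crowdP q m r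

lemma crowdP_nonneg {q : ℝ} (hq0 : 0 ≤ q) (hq1 : q ≤ 1) : ∀ m r, 0 ≤ crowdP q m r := by
  intro m
  induction m with
  | zero => intro r; rw [crowdP]; split <;> norm_num
  | succ m ih =>
    intro r
    rw [crowdP]
    have h1 : q ^ r ≤ 1 := pow_le_one₀ hq0 hq1
    have h0 := ih r
    have h2 : (0:ℝ) ≤ (if r = 0 then 0 else crowdP q m (r - 1) * q ^ (r - 1)) := by
      split
      · exact le_refl 0
      · exact mul_nonneg (ih _) (pow_nonneg hq0 _)
    nlinarith [pow_nonneg hq0 r]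

lemma crowdP_vanish {q : ℝ} : ∀ m r, m < r → crowdP q m r = 0 := by
  intro m
  induction m with
  | zero => intro r hr; rw [crowdP, if_neg (by omega)]
  | succ m ih =>
    intro r hr
    rw [crowdP]
    rw [ih r (by omega), if_neg (by omega : ¬ r = 0), ih (r-1) (by omega)]
    ring

lemma crowdP_mass {q : ℝ} : ∀ m, ∑ r ∈ Finset.range (m+1), crowdP q m r = 1 := by
  intro m
  induction m with
  | zero => simp [crowdP]
  | succ m ih =>
    have expand : ∀ r, crowdP q (m+1) r =
        crowdP q m r * (1 - q ^ r) + (if r = 0 then 0 else crowdP q m (r - 1) * q ^ (r - 1)) := by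
      intro r; rw [crowdP]
    have hB : ∑ r ∈ Finset.range (m+2), (if r = 0 then (0:ℝ) else crowdP q m (r-1) * q^(r-1))
        = ∑ r ∈ Finset.range (m+1), crowdP q m r * q ^ r := by
      rw [Finset.sum_range_succ' (fun r => if r = 0 then (0:ℝ) else crowdP q m (r-1) * q^(r-1)) (m+1)]
      simp
    calc ∑ r ∈ Finset.range (m+2), crowdP q (m+1) r
        = ∑ r ∈ Finset.range (m+2), (crowdP q m r * (1 - q ^ r)
            + (if r = 0 then 0 else crowdP q m (r - 1) * q ^ (r - 1))) :=
          Finset.sum_congr rfl fun r _ => expand r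
      _ = ∑ r ∈ Finset.range (m+2), crowdP q m r * (1 - q ^ r)
            + ∑ r ∈ Finset.range (m+2), (if r = 0 then 0 else crowdP q m (r - 1) * q ^ (r - 1)) :=
          Finset.sum_add_distrib
      _ = (∑ r ∈ Finset.range (m+1), crowdP q m r * (1 - q ^ r))
            + ∑ r ∈ Finset.range (m+1), crowdP q m r * q ^ r := by
          rw [Finset.sum_range_succ (fun r => crowdP q m r * (1 - q ^ r)),
            crowdP_vanish m (m+1) (by omega), hB]
          ring
      _ = ∑ r ∈ Finset.range (m+1), crowdP q m r := by
          rw [← Finset.sum_add_distrib]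
          exact Finset.sum_congr rfl fun r _ => by ring
      _ = 1 := ih

lemma crowdG_recur {q : ℝ} (m : ℕ) :
    crowdG q (m+1) q = crowdG q m q - (1 - q) * crowdG q m (q^2) := by
  have expand : ∀ r, crowdP q (m+1) r =
      crowdP q m r * (1 - q ^ r) + (if r = 0 then 0 else crowdP q m (r - 1) * q ^ (r - 1)) := by
    intro r; rw [crowdP]
  have hsq : ∀ r : ℕ, (q^2)^r = q^r * q^r := by
    intro r; rw [← pow_mul, two_mul, pow_add]
  have hB : ∑ r ∈ Finset.range (m+2), (if r = 0 then (0:ℝ) else crowdP q m (r-1) * q^(r-1)) * q ^ r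
      = q * ∑ r ∈ Finset.range (m+1), crowdP q m r * (q^2) ^ r := by
    rw [Finset.sum_range_succ']
    simp only [Nat.add_sub_cancel, Nat.succ_ne_zero, if_false, ite_true, zero_mul, add_zero]
    rw [Finset.mul_sum]
    refine Finset.sum_congr rfl fun r _ => ?_
    rw [hsq r, pow_succ]
    ring
  unfold crowdG
  calc ∑ r ∈ Finset.range (m+2), crowdP q (m+1) r * q ^ r
      = ∑ r ∈ Finset.range (m+2), (crowdP q m r * (1 - q ^ r) * q ^ r
          + (if r = 0 then 0 else crowdP q m (r - 1) * q ^ (r - 1)) * q ^ r) := by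
        refine Finset.sum_congr rfl fun r _ => ?_
        rw [expand r]; ring
    _ = ∑ r ∈ Finset.range (m+2), crowdP q m r * (1 - q ^ r) * q ^ r
          + ∑ r ∈ Finset.range (m+2), (if r = 0 then 0 else crowdP q m (r - 1) * q ^ (r - 1)) * q ^ r :=
        Finset.sum_add_distrib
    _ = (∑ r ∈ Finset.range (m+1), (crowdP q m r * q ^ r - crowdP q m r * (q^2) ^ r))
          + q * ∑ r ∈ Finset.range (m+1), crowdP q m r * (q^2) ^ r := by
        rw [Finset.sum_range_succ (fun r => crowdP q m r * (1 - q ^ r) * q ^ r),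
          crowdP_vanish m (m+1) (by omega), hB]
        simp only [zero_mul, add_zero]
        congr 1
        refine Finset.sum_congr rfl fun r _ => ?_
        rw [hsq r]; ring
    _ = crowdG q m q - (1 - q) * crowdG q m (q^2) := by
        rw [Finset.sum_sub_distrib]
        unfold crowdG; ring

lemma crowdG_cs {q : ℝ} (hq0 : 0 ≤ q) (hq1 : q ≤ 1) (m : ℕ) :
    (crowdG q m q)^2 ≤ crowdG q m (q^2) := by
  have key := Finset.sum_mul_sq_le_sq_mul_sq (Finset.range (m+1))
    (fun r => Real.sqrt (crowdP q m r)) (fun r => Real.sqrt (crowdP q m r) * q ^ r)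
  have e1 : ∑ r ∈ Finset.range (m+1),
      Real.sqrt (crowdP q m r) * (Real.sqrt (crowdP q m r) * q ^ r)
      = ∑ r ∈ Finset.range (m+1), crowdP q m r * q ^ r := by
    refine Finset.sum_congr rfl fun r _ => ?_
    rw [← mul_assoc, Real.mul_self_sqrt (crowdP_nonneg hq0 hq1 m r)]
  have e2 : ∑ r ∈ Finset.range (m+1), (Real.sqrt (crowdP q m r))^2
      = ∑ r ∈ Finset.range (m+1), crowdP q m r :=
    Finset.sum_congr rfl fun r _ => Real.sq_sqrt (crowdP_nonneg hq0 hq1 m r)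
  have e3 : ∑ r ∈ Finset.range (m+1), (Real.sqrt (crowdP q m r) * q ^ r)^2
      = ∑ r ∈ Finset.range (m+1), crowdP q m r * (q^2) ^ r := by
    refine Finset.sum_congr rfl fun r _ => ?_
    rw [mul_pow, Real.sq_sqrt (crowdP_nonneg hq0 hq1 m r), ← pow_mul, mul_comm r 2, pow_mul]
  rw [e1, e2, e3, crowdP_mass, one_mul] at key
  exact key

lemma crowdG_pos {q : ℝ} (hq0 : 0 < q) (hq1 : q ≤ 1) (m : ℕ) : 0 < crowdG q m q := by
  have hpow : (0:ℝ) < q ^ m := pow_pos hq0 m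
  have hle : q ^ m * 1 ≤ crowdG q m q := by
    rw [← crowdP_mass (q := q) m, Finset.mul_sum]
    unfold crowdG
    refine Finset.sum_le_sum fun r hr => ?_
    have h1 : q ^ m ≤ q ^ r :=
      pow_le_pow_of_le_one hq0.le hq1 (by simp at hr; omega)
    have h2 := crowdP_nonneg hq0.le hq1 m r
    nlinarith
  linarith

lemma crowdG_le_one {q : ℝ} (hq0 : 0 ≤ q) (hq1 : q ≤ 1) (m : ℕ) : crowdG q m q ≤ 1 := by
  rw [← crowdP_mass (q := q) m]
  unfold crowdG
  refine Finset.sum_le_sum fun r _ => ?_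
  have h1 : q ^ r ≤ 1 := pow_le_one₀ hq0 hq1
  have h2 := crowdP_nonneg hq0 hq1 m r
  nlinarith

lemma crowdG_bound {q : ℝ} (hq0 : 0 < q) (hq1 : q < 1) (m : ℕ) :
    crowdG q m q ≤ 1 / (1 + (1-q) * m) := by
  set c : ℝ := 1 - q with hc
  have hc0 : 0 < c := by simp only [hc, sub_pos]; exact hq1
  have key : ∀ m : ℕ, 1 + c * m ≤ 1 / crowdG q m q := by
    intro m
    induction m with
    | zero => simp [crowdG, crowdP]
    | succ m ih =>
      have ha : 0 < crowdG q m q := crowdG_pos hq0 hq1.le m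
      have ha1 : crowdG q m q ≤ 1 := crowdG_le_one hq0.le hq1.le m
      set a := crowdG q m q
      have hca : c * a < 1 := by nlinarith
      have hrec : crowdG q (m+1) q ≤ a - c * a^2 := by
        rw [crowdG_recur]
        have := crowdG_cs hq0.le hq1.le m
        nlinarith
      have hpos' : 0 < crowdG q (m+1) q := crowdG_pos hq0 hq1.le (m+1)
      have h1 : 1 / (a - c * a^2) ≤ 1 / crowdG q (m+1) q :=
        one_div_le_one_div_of_le hpos' hrec
      have h2 : 1 / a + c ≤ 1 / (a - c * a^2) := by
        rw [le_div_iff₀ (by nlinarith)]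
        have he : (1/a + c) * (a - c*a^2) = (1 + c*a) * (1 - c*a) := by
          field_simp
        rw [he]; nlinarith [sq_nonneg (c*a)]
      push_cast
      linarith
  have h := key m
  have ha : 0 < crowdG q m q := crowdG_pos hq0 hq1.le m
  have hd : 0 < 1 + c * m := by positivity
  rw [le_div_iff₀ hd]
  calc crowdG q m q * (1 + c*m) ≤ crowdG q m q * (1 / crowdG q m q) :=
        mul_le_mul_of_nonneg_left h ha.le
    _ = 1 := mul_one_div_cancel ha.ne'

lemma crowd_tail {q : ℝ} (hq0 : 0 < q) (hq1 : q ≤ 1) (m k : ℕ) :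
    ∑ r ∈ Finset.range k, crowdP q m r ≤ crowdG q m q / q ^ (k-1) := by
  have h2 : 0 < q ^ (k-1) := pow_pos hq0 _
  have step1 : ∑ r ∈ Finset.range k, crowdP q m r
      ≤ (∑ r ∈ Finset.range k, crowdP q m r * q ^ r) / q ^ (k-1) := by
    rw [Finset.sum_div]
    refine Finset.sum_le_sum fun r hr => ?_
    have hr' : r ≤ k - 1 := by simp at hr; omega
    have h1 : q ^ (k-1) ≤ q ^ r := pow_le_pow_of_le_one hq0.le hq1 hr'
    rw [le_div_iff₀ h2]
    exact mul_le_mul_of_nonneg_left h1 (crowdP_nonneg hq0.le hq1 m r)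
  have step2 : ∑ r ∈ Finset.range k, crowdP q m r * q ^ r ≤ crowdG q m q := by
    unfold crowdG
    rcases le_or_gt k (m+1) with h | h
    · exact Finset.sum_le_sum_of_subset_of_nonneg (Finset.range_subset_range.mpr h)
        fun r _ _ => mul_nonneg (crowdP_nonneg hq0.le hq1 m r) (pow_nonneg hq0.le r)
    · have heq : ∑ r ∈ Finset.range (m+1), crowdP q m r * q ^ r
          = ∑ r ∈ Finset.range k, crowdP q m r * q ^ r := by
        refine Finset.sum_subset (Finset.range_subset_range.mpr h.le) fun x _ hx => ?_
        simp only [Finset.mem_range, not_lt] at hx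
        rw [crowdP_vanish m x (by omega), zero_mul]
      exact le_of_eq heq.symm
  calc ∑ r ∈ Finset.range k, crowdP q m r
      ≤ (∑ r ∈ Finset.range k, crowdP q m r * q ^ r) / q ^ (k-1) := step1
    _ ≤ crowdG q m q / q ^ (k-1) := by gcongr

theorem stmt_7 (α : ℝ) (hα : 0 < α) (m : ℕ) (hm : 1 ≤ m) (ℓ : ℕ)
    (hℓ : 1 ≤ ⌊crowdX α m⌋₊ - ℓ) :
    ∑ r ∈ Finset.range (⌊crowdX α m⌋₊ - ℓ), crowdP (Real.exp (-α)) m r ≤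
      Real.exp (-α * ℓ) := by
  set q : ℝ := Real.exp (-α) with hq
  have hq0 : 0 < q := Real.exp_pos _
  have hq1 : q < 1 := Real.exp_lt_one_iff.mpr (by linarith)
  set k : ℕ := ⌊crowdX α m⌋₊ - ℓ with hk
  have hk1 : 1 ≤ k := hℓ
  have hkl : k + ℓ = ⌊crowdX α m⌋₊ := by omega
  set N : ℕ := k - 1 + ℓ with hN
  have hNfloor : N + 1 = ⌊crowdX α m⌋₊ := by omega
  have hT : (1:ℝ) ≤ 1 + (Real.exp α - 1) * m := by
    have h1 : (1:ℝ) ≤ Real.exp α := Real.one_le_exp hα.le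
    have h2 : (0:ℝ) ≤ (Real.exp α - 1) * m := mul_nonneg (by linarith) (Nat.cast_nonneg m)
    linarith
  have hx0 : 0 ≤ crowdX α m := by
    unfold crowdX
    have h := Real.log_nonneg hT
    have h2 : 0 ≤ 1/α := by positivity
    exact mul_nonneg h2 h
  have hfloor : (⌊crowdX α m⌋₊ : ℝ) ≤ crowdX α m := Nat.floor_le hx0
  have hexp : Real.exp (α * crowdX α m) = 1 + (Real.exp α - 1) * m := by
    unfold crowdX
    rw [show α * ((1/α) * Real.log (1 + (Real.exp α - 1) * m))
        = Real.log (1 + (Real.exp α - 1) * m) by field_simp]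
    exact Real.exp_log (by linarith)
  have hNcast : (N:ℝ) = (⌊crowdX α m⌋₊:ℝ) - 1 := by
    have := hNfloor
    have h := congrArg (fun n : ℕ => (n:ℝ)) hNfloor
    push_cast at h
    linarith
  have hexpinv : Real.exp α * Real.exp (-α) = 1 := by
    rw [← Real.exp_add]; simp
  have key : Real.exp ((N:ℝ) * α) ≤ 1 + (1 - q) * m := by
    have h2 : Real.exp (α * (⌊crowdX α m⌋₊:ℝ)) ≤ 1 + (Real.exp α - 1) * m := by
      rw [← hexp]
      exact Real.exp_le_exp.mpr (mul_le_mul_of_nonneg_left hfloor hα.le)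
    calc Real.exp ((N:ℝ) * α)
        = Real.exp (α * (⌊crowdX α m⌋₊:ℝ)) * Real.exp (-α) := by
          rw [← Real.exp_add]
          congr 1
          rw [hNcast]; ring
      _ ≤ (1 + (Real.exp α - 1) * m) * Real.exp (-α) :=
          mul_le_mul_of_nonneg_right h2 (Real.exp_pos _).le
      _ = q + (1 - q) * m := by
          rw [hq]
          linear_combination (m:ℝ) * hexpinv
      _ ≤ 1 + (1 - q) * m := by linarith
  have hd : (0:ℝ) < 1 + (1 - q) * m := by
    have : (0:ℝ) ≤ (1 - q) * m := mul_nonneg (by linarith) (Nat.cast_nonneg m)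
    linarith
  calc ∑ r ∈ Finset.range k, crowdP q m r
      ≤ crowdG q m q / q ^ (k-1) := crowd_tail hq0 hq1.le m k
    _ ≤ (1 / (1 + (1-q) * m)) / q ^ (k-1) := by
        have := crowdG_bound hq0 hq1 m
        gcongr
    _ ≤ Real.exp (-α * ℓ) := by
        rw [div_le_iff₀ (pow_pos hq0 _)]
        have hrw : Real.exp (-α * ℓ) * q ^ (k-1) = (Real.exp ((N:ℝ) * α))⁻¹ := by
          rw [hq, ← Real.exp_nat_mul, ← Real.exp_add, ← Real.exp_neg]
          congr 1
          have hc : ((k-1:ℕ):ℝ) = (k:ℝ) - 1 := by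
            have : ((k-1:ℕ):ℝ) + 1 = (k:ℝ) := by
              have := Nat.sub_add_cancel hk1
              exact_mod_cast congrArg (fun n : ℕ => (n:ℝ)) this
            linarith
          have hc2 : (N:ℝ) = (k:ℝ) - 1 + ℓ := by
            rw [hN]; push_cast [hc]; ring
          rw [hc, hc2]; ring
        rw [hrw, one_div]
        rw [inv_le_inv₀ hd (Real.exp_pos _)]
        exact key
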